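/- Let G be a profinite group and let R = O^[FD](G) be the intersection of all closed normal subgroups K such that G/K is Fitting-degenerate. Then G/R is Fitting-degenerate and R is Fitting-regular. -/

import Mathlib

/-- A subgroup `H` of `G` is subnormal: there is a finite chain of subgroups from `H`
to `G`, each normal in the next. -/
def IsSubnormalSub {G : Type*} [Group G] (H : Subgroup G) : Prop :=
  ∃ (n : ℕ) (s : ℕ → Subgroup G), s 0 = H ∧ s n = ⊤ ∧
    ∀ i < n, s i ≤ s (i + 1) ∧ ((s i).subgroupOf (s (i + 1))).Normal

/-- A group is quasisimple if it is perfect and its central quotient is simple. -/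
def IsQuasisimple (G : Type*) [Group G] : Prop :=
  commutator G = ⊤ ∧ IsSimpleGroup (G ⧸ Subgroup.center G)

/-- A topological (profinite) group is pro-`π` if every prime dividing the order of a
finite quotient by an open normal subgroup lies in `π`. -/
def IsProPi (π : Set ℕ) (G : Type*) [Group G] [TopologicalSpace G] : Prop :=
  ∀ N : Subgroup G, N.Normal → IsOpen (N : Set G) →
    ∀ p : ℕ, p.Prime → p ∣ Nat.card (G ⧸ N) → p ∈ π

/-- A topological group is pronilpotent if all its quotients by open normal subgroups
are nilpotent. -/
def IsPronilpotent (G : Type*) [Group G] [TopologicalSpace G] : Prop :=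
  ∀ (N : Subgroup G) (hN : N.Normal), IsOpen (N : Set G) →
    haveI := hN
    Group.IsNilpotent (G ⧸ N)

/-- A component of a profinite group: a finite closed subnormal quasisimple subgroup. -/
def IsComponentPro {G : Type*} [Group G] [TopologicalSpace G] (Q : Subgroup G) : Prop :=
  IsSubnormalSub Q ∧ IsClosed (Q : Set G) ∧ Finite Q ∧ IsQuasisimple Q

/-- The generalised Fitting subgroup of a topological group: the closed subgroup
generated by all closed normal pronilpotent subgroups and all components. -/
def genFitting (G : Type*) [Group G] [TopologicalSpace G] [IsTopologicalGroup G] : Subgroup G :=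
  (⨆ H ∈ {H : Subgroup G | (H.Normal ∧ IsClosed (H : Set G) ∧ IsPronilpotent H) ∨
      IsComponentPro H}, H).topologicalClosure

/-- A topological group is Fitting-degenerate if its generalised Fitting subgroup is trivial. -/
def FittingDegenerate (G : Type*) [Group G] [TopologicalSpace G] [IsTopologicalGroup G] : Prop :=
  genFitting G = ⊥

/-- A topological group is Fitting-regular if no nontrivial quotient by a closed normal
subgroup is Fitting-degenerate. -/
def FittingRegular (G : Type*) [Group G] [TopologicalSpace G] [IsTopologicalGroup G] : Prop :=
  ∀ (N : Subgroup G) (hN : N.Normal), IsClosed (N : Set G) → N ≠ ⊤ →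
    haveI := hN
    ¬ FittingDegenerate (G ⧸ N)

/-! A continuous surjection from a compact group onto a Hausdorff Fitting-degenerate group kills
every closed normal pronilpotent subgroup and every component, because their images are again
of this kind (or trivial). Hence Fitting-degeneracy passes to subdirect products and to
extensions. So `G/R` is Fitting-degenerate, as a subdirect product of the Fitting-degenerate
quotients `G/K`. If `R/N` is Fitting-degenerate and `M` is the normal core of `N` in `G`, then
`R/M` is a subdirect product of the conjugates of `R/N`, and `G/M` is an extension of `R/M` by
`G/R`; thus `M` is one of the `K`, and `R ≤ M ≤ N`. -/

theorem IsPronilpotent.of_surjective {A B : Type*} [Group A] [TopologicalSpace A] [Group B]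
    [TopologicalSpace B] {f : A →* B} (hc : Continuous f) (hs : Function.Surjective f)
    (hA : IsPronilpotent A) : IsPronilpotent B := by
  intro N hN hopen
  have := hA (N.comap f) (hN.comap f) (hopen.preimage hc)
  exact Group.nilpotent_of_surjective _ (QuotientGroup.map_surjective_of_surjective _ N f
    (QuotientGroup.mk_surjective.comp hs) le_rfl)

theorem IsQuasisimple.nontrivial {Q : Type*} [Group Q] (h : IsQuasisimple Q) : Nontrivial Q := by
  have := h.2
  obtain ⟨x, y, hxy⟩ := exists_pair_ne (Q ⧸ Subgroup.center Q)
  obtain ⟨a, rfl⟩ := QuotientGroup.mk_surjective x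
  obtain ⟨b, rfl⟩ := QuotientGroup.mk_surjective y
  exact ⟨a, b, fun hab => hxy (congrArg _ hab)⟩

theorem IsQuasisimple.of_surjective {Q Q' : Type*} [Group Q] [Group Q'] [Nontrivial Q']
    {f : Q →* Q'} (hs : Function.Surjective f) (hQ : IsQuasisimple Q) : IsQuasisimple Q' := by
  obtain ⟨hperf, hsimple⟩ := hQ
  have hperf' : commutator Q' = ⊤ := by
    rw [commutator_def, ← Subgroup.map_top_of_surjective f hs, ← Subgroup.map_commutator,
      ← commutator_def, hperf]
  have hcenter : Subgroup.center Q' ≠ ⊤ := by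
    rw [Ne, ← commutator_eq_bot_iff_center_eq_top, hperf']
    exact top_ne_bot
  have hcentral : Subgroup.center Q ≤ (Subgroup.center Q').comap f := by
    intro z hz
    rw [Subgroup.mem_comap, Subgroup.mem_center_iff]
    intro y
    obtain ⟨q, rfl⟩ := hs y
    rw [← map_mul, ← map_mul, Subgroup.mem_center_iff.mp hz q]
  have : Nontrivial (Q' ⧸ Subgroup.center Q') := QuotientGroup.nontrivial_iff.mpr hcenter
  exact ⟨hperf', IsSimpleGroup.isSimpleGroup_of_surjective _
    (QuotientGroup.map_surjective_of_surjective _ _ f (QuotientGroup.mk_surjective.comp hs)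
      hcentral)⟩

section Subnormal

variable {X Y : Type*} [Group X] [Group Y]

theorem IsSubnormalSub.map {f : X →* Y} (hs : Function.Surjective f) {H : Subgroup X}
    (h : IsSubnormalSub H) : IsSubnormalSub (H.map f) := by
  obtain ⟨n, s, h0, hn, hstep⟩ := h
  refine ⟨n, fun i => (s i).map f, by simp only [h0], by simp only [hn,
    Subgroup.map_top_of_surjective f hs], fun i hi => ?_⟩
  obtain ⟨hle, hnorm⟩ := hstep i hi
  refine ⟨Subgroup.map_mono hle, ?_⟩
  rw [Subgroup.normal_subgroupOf_iff_le_normalizer (Subgroup.map_mono hle)]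
  exact (Subgroup.map_mono ((Subgroup.normal_subgroupOf_iff_le_normalizer hle).mp hnorm)).trans
    (Subgroup.le_normalizer_map f)

theorem IsSubnormalSub.comap (f : Y →* X) {H : Subgroup X} (h : IsSubnormalSub H) :
    IsSubnormalSub (H.comap f) := by
  obtain ⟨n, s, h0, hn, hstep⟩ := h
  refine ⟨n, fun i => (s i).comap f, by simp only [h0], by simp only [hn, Subgroup.comap_top],
    fun i hi => ?_⟩
  obtain ⟨hle, hnorm⟩ := hstep i hi
  refine ⟨Subgroup.comap_mono hle, ?_⟩
  rw [Subgroup.normal_subgroupOf_iff_le_normalizer (Subgroup.comap_mono hle)]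
  exact (Subgroup.comap_mono ((Subgroup.normal_subgroupOf_iff_le_normalizer hle).mp hnorm)).trans
    (Subgroup.le_normalizer_comap f)

end Subnormal

section Component

variable {X : Type*} [Group X] [TopologicalSpace X]

theorem IsComponentPro.map {Y : Type*} [Group Y] [TopologicalSpace Y] [T1Space Y] {f : X →* Y}
    (hs : Function.Surjective f) {H : Subgroup X} (h : IsComponentPro H) (hne : H.map f ≠ ⊥) :
    IsComponentPro (H.map f) := by
  obtain ⟨hsub, -, hfin, hqs⟩ := h
  have hfin' : Finite (H.map f) := Finite.of_surjective _ (f.subgroupMap_surjective H)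
  have : Nontrivial (H.map f) := (Subgroup.nontrivial_iff_ne_bot _).mpr hne
  exact ⟨hsub.map hs, (Set.toFinite _).isClosed, hfin',
    hqs.of_surjective (f.subgroupMap_surjective H)⟩

theorem IsComponentPro.subgroupOf {H M : Subgroup X} (hHM : H ≤ M) (h : IsComponentPro H) :
    IsComponentPro (H.subgroupOf M) := by
  obtain ⟨hsub, hcl, hfin, hqs⟩ := h
  let e := Subgroup.subgroupOfEquivOfLe hHM
  have := hqs.nontrivial
  have : Nontrivial (H.subgroupOf M) := e.toEquiv.nontrivial
  exact ⟨hsub.comap M.subtype, hcl.preimage continuous_subtype_val,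
    e.symm.toEquiv.finite_iff.mp hfin,
    hqs.of_surjective (f := e.symm.toMonoidHom) e.symm.surjective⟩

end Component

def IsFittingConstituent {X : Type*} [Group X] [TopologicalSpace X] (H : Subgroup X) : Prop :=
  (H.Normal ∧ IsClosed (H : Set X) ∧ IsPronilpotent H) ∨ IsComponentPro H

section Constituent

variable {X Y : Type*} [Group X] [TopologicalSpace X] [Group Y] [TopologicalSpace Y]

theorem IsFittingConstituent.le_genFitting [IsTopologicalGroup X] {H : Subgroup X}
    (hH : IsFittingConstituent H) : H ≤ genFitting X :=
  (le_biSup (f := fun H : Subgroup X => H) hH).trans (Subgroup.le_topologicalClosure _)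

theorem fittingDegenerate_iff_forall_isFittingConstituent [IsTopologicalGroup X] [T1Space X] :
    FittingDegenerate X ↔ ∀ H : Subgroup X, IsFittingConstituent H → H = ⊥ := by
  refine ⟨fun hX H hH => le_bot_iff.mp (hX ▸ hH.le_genFitting), fun h => ?_⟩
  have hsup : (⨆ H ∈ {H : Subgroup X | IsFittingConstituent H}, H) = ⊥ :=
    le_bot_iff.mp (iSup₂_le fun H hH => (h H hH).le)
  refine le_bot_iff.mp (Subgroup.topologicalClosure_minimal _ hsup.le ?_)
  simp

theorem IsFittingConstituent.map [CompactSpace X] [T2Space Y] {f : X →* Y} (hc : Continuous f)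
    (hs : Function.Surjective f) {H : Subgroup X} (h : IsFittingConstituent H)
    (hne : H.map f ≠ ⊥) : IsFittingConstituent (H.map f) := by
  rcases h with ⟨hnorm, hcl, hpro⟩ | hcomp
  · refine Or.inl ⟨hnorm.map f hs, ?_, hpro.of_surjective ?_ (f.subgroupMap_surjective H)⟩
    · rw [Subgroup.coe_map]
      exact (hcl.isCompact.image hc).isClosed
    · exact (hc.comp continuous_subtype_val).subtype_mk _
  · exact Or.inr (hcomp.map hs hne)

theorem IsFittingConstituent.subgroupOf {H M : Subgroup X} (hHM : H ≤ M)
    (h : IsFittingConstituent H) : IsFittingConstituent (H.subgroupOf M) := by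
  rcases h with ⟨hnorm, hcl, hpro⟩ | hcomp
  · let e := Subgroup.subgroupOfEquivOfLe hHM
    have he : Continuous e.symm := (continuous_subtype_val.subtype_mk _).subtype_mk _
    exact Or.inl ⟨hnorm.subgroupOf M, hcl.preimage continuous_subtype_val,
      hpro.of_surjective (f := e.symm.toMonoidHom) he e.symm.surjective⟩
  · exact Or.inr (hcomp.subgroupOf hHM)

theorem IsFittingConstituent.le_ker [CompactSpace X] [IsTopologicalGroup Y] [T2Space Y]
    {f : X →* Y} (hc : Continuous f) (hs : Function.Surjective f) (hY : FittingDegenerate Y)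
    {H : Subgroup X} (h : IsFittingConstituent H) : H ≤ f.ker := by
  rw [← Subgroup.map_eq_bot_iff]
  by_contra hne
  exact hne (fittingDegenerate_iff_forall_isFittingConstituent.mp hY _ (h.map hc hs hne))

end Constituent

theorem MonoidHom.exists_continuous_lift {A B Y : Type*} [Group A] [TopologicalSpace A]
    [CompactSpace A] [Group B] [TopologicalSpace B] [T2Space B] [Group Y] [TopologicalSpace Y]
    {φ : A →* B} (hφc : Continuous φ) (hφs : Function.Surjective φ) {f : A →* Y}
    (hf : Continuous f) (hker : φ.ker ≤ f.ker) :
    ∃ g : B →* Y, Continuous g ∧ ∀ a, g (φ a) = f a := by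
  let g := φ.liftOfRightInverse _ (Function.rightInverse_surjInv hφs) ⟨f, hker⟩
  have hg : ∀ a, g (φ a) = f a := φ.liftOfRightInverse_comp_apply _ _ ⟨f, hker⟩
  refine ⟨g, ?_, hg⟩
  rw [(Topology.IsQuotientMap.of_surjective_continuous hφs hφc).continuous_iff]
  exact (funext hg : g ∘ φ = f) ▸ hf

section Closure

variable {X : Type*} [Group X] [TopologicalSpace X] [IsTopologicalGroup X] [CompactSpace X]
  [T1Space X]

theorem FittingDegenerate.of_iInf_ker_eq_bot {ι : Type*} {Y : ι → Type*} [∀ i, Group (Y i)]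
    [∀ i, TopologicalSpace (Y i)] [∀ i, IsTopologicalGroup (Y i)] [∀ i, T2Space (Y i)]
    {f : ∀ i, X →* Y i} (hc : ∀ i, Continuous (f i)) (hs : ∀ i, Function.Surjective (f i))
    (hY : ∀ i, FittingDegenerate (Y i)) (hker : ⨅ i, (f i).ker = ⊥) : FittingDegenerate X :=
  fittingDegenerate_iff_forall_isFittingConstituent.mpr fun _ hH =>
    le_bot_iff.mp (hker ▸ le_iInf fun i => hH.le_ker (hc i) (hs i) (hY i))

theorem FittingDegenerate.of_ker_le {Y : Type*} [Group Y] [TopologicalSpace Y]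
    [IsTopologicalGroup Y] [T2Space Y] {f : X →* Y} (hc : Continuous f)
    (hs : Function.Surjective f) (hY : FittingDegenerate Y) {K : Subgroup X}
    (hK : FittingDegenerate K) (hker : f.ker ≤ K) : FittingDegenerate X := by
  refine fittingDegenerate_iff_forall_isFittingConstituent.mpr fun H hH => ?_
  have hle := (hH.le_ker hc hs hY).trans hker
  have := fittingDegenerate_iff_forall_isFittingConstituent.mp hK _ (hH.subgroupOf hle)
  rwa [Subgroup.subgroupOf_eq_bot, disjoint_of_le_iff_left_eq_bot hle] at this

end Closure

theorem Subgroup.isClosed_normalCore {G : Type*} [Group G] [TopologicalSpace G]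
    [IsTopologicalGroup G] {H : Subgroup G} (hH : IsClosed (H : Set G)) :
    IsClosed (H.normalCore : Set G) := by
  rw [Subgroup.normalCore_eq_iInf_comap_conj, Subgroup.coe_iInf]
  exact isClosed_iInter fun g => hH.preimage
    ((continuous_const.mul continuous_id).mul continuous_const : Continuous fun x => g * x * g⁻¹)

section Residual

variable {G : Type*} [Group G] [TopologicalSpace G] [IsTopologicalGroup G]

theorem isClosed_normalCore_map_subtype {R : Subgroup G} (hRcl : IsClosed (R : Set G))
    {N : Subgroup R} (hN : IsClosed (N : Set R)) :
    IsClosed ((N.map R.subtype).normalCore : Set G) :=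
  Subgroup.isClosed_normalCore <| by
    rw [Subgroup.coe_map]
    exact hRcl.isClosedEmbedding_subtypeVal.isClosedMap _ hN

variable (G) in
def fittingDegenerateKernels : Set (Subgroup G) :=
  {K | ∃ hK : K.Normal, IsClosed (K : Set G) ∧ (haveI := hK; FittingDegenerate (G ⧸ K))}

theorem isClosed_sInf_fittingDegenerateKernels :
    IsClosed ((sInf (fittingDegenerateKernels G) : Subgroup G) : Set G) := by
  rw [Subgroup.coe_sInf]
  exact isClosed_biInter fun K hK => hK.2.1

variable [CompactSpace G]

theorem fittingDegenerate_map_mk_normalCore {R : Subgroup G} [R.Normal]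
    (hRcl : IsClosed (R : Set G)) {N : Subgroup R} [N.Normal] [IsClosed (N : Set R)]
    (hN : FittingDegenerate (R ⧸ N)) :
    FittingDegenerate (R.map (QuotientGroup.mk' (N.map R.subtype).normalCore)) := by
  set M := (N.map R.subtype).normalCore
  have : IsClosed (M : Set G) := isClosed_normalCore_map_subtype hRcl ‹_›
  have : CompactSpace R := isCompact_iff_compactSpace.mp hRcl.isCompact
  let φ := (QuotientGroup.mk' M).subgroupMap R
  have hφc : Continuous φ :=
    (QuotientGroup.continuous_mk.comp continuous_subtype_val).subtype_mk _
  let ψ (g : G) : R →* R ⧸ N := (QuotientGroup.mk' N).comp (MulAut.conjNormal g).toMonoidHom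
  have hψc (g : G) : Continuous (ψ g) := by
    refine QuotientGroup.continuous_mk.comp (continuous_induced_rng.2 ?_)
    simp only [Function.comp_def, MulEquiv.coe_toMonoidHom, MulAut.conjNormal_apply]
    fun_prop
  have hψs (g : G) : Function.Surjective (ψ g) :=
    QuotientGroup.mk_surjective.comp (MulAut.conjNormal g).surjective
  -- `M` is the intersection of the `G`-conjugates of `N`
  have hmem (r : R) : φ r = 1 ↔ ∀ g, ψ g r = 1 := by
    have hφ : φ r = 1 ↔ (r : G) ∈ M := by
      rw [← QuotientGroup.eq_one_iff, Subtype.ext_iff]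
      rfl
    rw [hφ]
    refine forall_congr' fun g => ?_
    rw [MonoidHom.comp_apply, QuotientGroup.mk'_apply, QuotientGroup.eq_one_iff,
      ← Subgroup.mem_map_iff_mem R.subtype_injective]
    simp [MulAut.conjNormal_apply]
  have hlift (g : G) := MonoidHom.exists_continuous_lift hφc
    ((QuotientGroup.mk' M).subgroupMap_surjective R) (hψc g) fun r hr => (hmem r).mp hr g
  choose ψ' hψ'c hψ' using hlift
  have : CompactSpace (R.map (QuotientGroup.mk' M)) := isCompact_iff_compactSpace.mp <| by
    rw [Subgroup.coe_map]
    exact hRcl.isCompact.image QuotientGroup.continuous_mk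
  refine FittingDegenerate.of_iInf_ker_eq_bot (Y := fun _ => R ⧸ N) hψ'c (fun g y => ?_)
    (fun _ => hN) ?_
  · obtain ⟨r, rfl⟩ := hψs g y
    exact ⟨φ r, hψ' g r⟩
  · refine eq_bot_iff.mpr fun x hx => ?_
    obtain ⟨r, rfl⟩ := (QuotientGroup.mk' M).subgroupMap_surjective R x
    exact (hmem r).mpr fun g => (hψ' g r).symm.trans (Subgroup.mem_iInf.mp hx g)

theorem fittingDegenerate_quotient_of_eq_sInf {R : Subgroup G} [R.Normal]
    (hR : R = sInf (fittingDegenerateKernels G)) : FittingDegenerate (G ⧸ R) := by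
  have : IsClosed (R : Set G) := hR ▸ isClosed_sInf_fittingDegenerateKernels
  have (K : fittingDegenerateKernels G) : (K : Subgroup G).Normal := K.2.fst
  have (K : fittingDegenerateKernels G) : IsClosed ((K : Subgroup G) : Set G) := K.2.snd.1
  have hlift (K : fittingDegenerateKernels G) :=
    (QuotientGroup.mk' R).exists_continuous_lift QuotientGroup.continuous_mk
      QuotientGroup.mk_surjective (f := QuotientGroup.mk' (K : Subgroup G))
      QuotientGroup.continuous_mk
      (by rw [QuotientGroup.ker_mk', QuotientGroup.ker_mk', hR]; exact sInf_le K.2)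
  choose f hfc hf using hlift
  refine FittingDegenerate.of_iInf_ker_eq_bot
    (Y := fun K : fittingDegenerateKernels G => G ⧸ (K : Subgroup G)) hfc (fun K y => ?_)
    (fun K => K.2.snd.2) ?_
  · obtain ⟨a, rfl⟩ := QuotientGroup.mk_surjective y
    exact ⟨a, hf K a⟩
  · refine eq_bot_iff.mpr fun x hx => ?_
    obtain ⟨a, rfl⟩ := QuotientGroup.mk_surjective x
    rw [Subgroup.mem_bot, QuotientGroup.eq_one_iff, hR, Subgroup.mem_sInf]
    intro K hK
    have := Subgroup.mem_iInf.mp hx ⟨K, hK⟩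
    rwa [MonoidHom.mem_ker, ← QuotientGroup.mk'_apply, hf, QuotientGroup.mk'_apply,
      QuotientGroup.eq_one_iff] at this

theorem fittingRegular_of_eq_sInf {R : Subgroup G} [R.Normal]
    (hR : R = sInf (fittingDegenerateKernels G)) : FittingRegular R := by
  intro N hN hNcl hNtop hNfd
  have hRcl : IsClosed (R : Set G) := hR ▸ isClosed_sInf_fittingDegenerateKernels
  have : IsClosed (N : Set R) := hNcl
  set M := (N.map R.subtype).normalCore
  have : IsClosed (M : Set G) := isClosed_normalCore_map_subtype hRcl hNcl
  have hMR : M ≤ R := (N.map R.subtype).normalCore_le.trans (Subgroup.map_subtype_le N)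
  obtain ⟨f, hfc, hf⟩ := (QuotientGroup.mk' M).exists_continuous_lift
    QuotientGroup.continuous_mk QuotientGroup.mk_surjective (f := QuotientGroup.mk' R) QuotientGroup.continuous_mk
    (by rw [QuotientGroup.ker_mk', QuotientGroup.ker_mk']; exact hMR)
  have hfs : Function.Surjective f := fun y => by
    obtain ⟨a, rfl⟩ := QuotientGroup.mk_surjective y
    exact ⟨a, hf a⟩
  have hker : f.ker ≤ R.map (QuotientGroup.mk' M) := fun x hx => by
    obtain ⟨a, rfl⟩ := QuotientGroup.mk_surjective x
    refine ⟨a, ?_, rfl⟩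
    rwa [MonoidHom.mem_ker, ← QuotientGroup.mk'_apply, hf, QuotientGroup.mk'_apply,
      QuotientGroup.eq_one_iff] at hx
  have hMfd : FittingDegenerate (G ⧸ M) := FittingDegenerate.of_ker_le hfc hfs
    (fittingDegenerate_quotient_of_eq_sInf hR) (fittingDegenerate_map_mk_normalCore hRcl hNfd) hker
  have hRM : R ≤ M := hR ▸ sInf_le ⟨inferInstance, ‹_›, hMfd⟩
  refine hNtop (eq_top_iff.mpr fun r _ => ?_)
  exact (Subgroup.mem_map_iff_mem R.subtype_injective).mp
    ((N.map R.subtype).normalCore_le (hRM r.2))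

end Residual

theorem fd_residual_general (G : Type*) [Group G] [TopologicalSpace G] [IsTopologicalGroup G] [CompactSpace G]
    (R : Subgroup G) [R.Normal]
    (hR : R = sInf {K : Subgroup G | ∃ hK : K.Normal, IsClosed (K : Set G) ∧
      (haveI := hK; FittingDegenerate (G ⧸ K))}) :
    FittingDegenerate (G ⧸ R) ∧ FittingRegular R :=
  ⟨fittingDegenerate_quotient_of_eq_sInf hR, fittingRegular_of_eq_sInf hR⟩

/-- The Fitting-degenerate residual `R = O^[FD](G)`: `G/R` is Fitting-degenerate
and `R` is Fitting-regular. -/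
theorem fd_residual (G : Type*) [Group G] [TopologicalSpace G] [IsTopologicalGroup G] [CompactSpace G] [T2Space G] [TotallyDisconnectedSpace G]
    (R : Subgroup G) [R.Normal]
    (hR : R = sInf {K : Subgroup G | ∃ hK : K.Normal, IsClosed (K : Set G) ∧
      (haveI := hK; FittingDegenerate (G ⧸ K))}) :
    FittingDegenerate (G ⧸ R) ∧ FittingRegular R :=
  fd_residual_general G R hR
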